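/- arXiv:0709.2272 — 4 statements merged into one kernel-verified Lean document; each statement's English description precedes it below -/
import Mathlib

section
/- If F and G are hereditary families of finite subsets of ℕ, then the family F[G] = {F_1 ∪ ... ∪ F_k : F_1,...,F_k ∈ G, m_1 ≤ F_1 < ... < m_k ≤ F_k for some (m_1,...,m_k) ∈ F} is hereditary. -/
/-- A family of finite subsets of `ℕ` is *hereditary* if it is closed under subsets. -/
def IsHereditary (𝒜 : Set (Finset ℕ)) : Prop :=
  ∀ F ∈ 𝒜, ∀ G : Finset ℕ, G ⊆ F → G ∈ 𝒜

/-- A family of finite subsets of `ℕ` is *spreading* if any member stays in the family after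
replacing its elements by larger ones, keeping the strict order. -/
def IsSpreading (𝒜 : Set (Finset ℕ)) : Prop :=
  ∀ F ∈ 𝒜, ∀ f : ℕ → ℕ,
    (∀ p ∈ F, ∀ q ∈ F, p < q → f p < f q) → (∀ p ∈ F, p ≤ f p) →
      F.image f ∈ 𝒜

/-- The image of a family of finite sets in the Cantor space `2^ℕ` (product topology),
identifying a finite set with its characteristic function. -/
def charImage (𝒜 : Set (Finset ℕ)) : Set (ℕ → Bool) :=
  (fun (F : Finset ℕ) (n : ℕ) => decide (n ∈ F)) '' 𝒜

/-- The family `M[N] = {F₁ ∪ ... ∪ F_k : F_i ∈ N, m₁ ≤ F₁ < m₂ ≤ F₂ < ... < m_k ≤ F_k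
for some (m₁,...,m_k) ∈ M}`, where `E < F` means `max E < min F` and `m ≤ F` means `m ≤ min F`. -/
def combine (M N : Set (Finset ℕ)) : Set (Finset ℕ) :=
  { A | ∃ (k : ℕ) (Fs : Fin k → Finset ℕ) (m : Fin k → ℕ),
      (∀ i, Fs i ∈ N) ∧ (∀ i, (Fs i).Nonempty) ∧
      StrictMono m ∧
      (∀ i, ∀ p ∈ Fs i, m i ≤ p) ∧
      (∀ i j : Fin k, i < j → ∀ p ∈ Fs i, p < m j) ∧
      Finset.image m Finset.univ ∈ M ∧
      A = Finset.univ.biUnion Fs }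

/-- if `F` and `G` are hereditary families of finite subsets of `ℕ`,
then `F[G]` is hereditary. -/
theorem combine_hereditary (F G : Set (Finset ℕ))
    (hF : IsHereditary F) (hG : IsHereditary G) :
    IsHereditary (combine F G) := by
  rintro A ⟨k, Fs, m, hN, hne, hmono, hlb, hub, hM, rfl⟩ B hB
  classical
  set s : Finset (Fin k) := Finset.univ.filter (fun i => (Fs i ∩ B).Nonempty) with hs
  let e : Fin s.card ≃o s := s.orderIsoOfFin rfl
  refine ⟨s.card, fun j => Fs (e j) ∩ B, fun j => m (e j), ?_, ?_, ?_, ?_, ?_, ?_, ?_⟩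
  · intro j; exact hG _ (hN _) _ Finset.inter_subset_left
  · intro j
    have := (e j).2
    exact (Finset.mem_filter.1 this).2
  · intro i j hij
    exact hmono (by exact_mod_cast e.strictMono hij)
  · intro j p hp
    exact hlb _ p (Finset.mem_inter.1 hp).1
  · intro i j hij p hp
    have : (e i : Fin k) < e j := by exact_mod_cast e.strictMono hij
    exact hub _ _ this p (Finset.mem_inter.1 hp).1
  · refine hF _ hM _ ?_
    intro x hx
    rcases Finset.mem_image.1 hx with ⟨j, _, rfl⟩
    exact Finset.mem_image.2 ⟨e j, Finset.mem_univ _, rfl⟩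
  · ext x
    simp only [Finset.mem_biUnion, Finset.mem_univ, true_and, Finset.mem_inter]
    constructor
    · intro hx
      have hxA := hB hx
      rcases Finset.mem_biUnion.1 hxA with ⟨i, _, hxi⟩
      have hi : i ∈ s := by
        rw [hs, Finset.mem_filter]
        exact ⟨Finset.mem_univ _, ⟨x, Finset.mem_inter.2 ⟨hxi, hx⟩⟩⟩
      obtain ⟨j, hj⟩ := e.surjective ⟨i, hi⟩
      refine ⟨j, ?_, hx⟩
      rw [hj]
      exact hxi
    · rintro ⟨j, _, hx⟩
      exact hx
end

section
/- If a normalized block sequence (x_1,...,x_{n²}) in a Banach space with a bimonotone basis is 2-equivalent to the unit vector basis of ℓ₁^{n²}, then the vector x = (1/n²)·(x_1 + ... + x_{n²}) satisfies ‖x‖ ≥ 1/2 and, for every sequence of intervals E_1 < E_2 < ... < E_n of ℕ, ∑_{j=1}^n ‖E_j x‖ ≤ 2. -/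
/-!
Testing the ℓ₁-estimate on constant coefficients gives `‖x‖ ≥ 1/2`. For the upper estimate,
`‖E_j x‖ ≤ n⁻² · #{i : x_i meets E_j}` by bimonotonicity, and since the blocks are successive
only the last block meeting `E_j` can also meet a later interval; hence the counts add up to at
most `n² + n`, and `∑ ‖E_j x‖ ≤ 1 + 1/n ≤ 2`.
-/

open Finset in
/-- The restriction `Ex` of a finitely supported vector `x` to the coordinates in `E`. -/
noncomputable def restrictF (x : ℕ →₀ ℝ) (E : Finset ℕ) : ℕ →₀ ℝ :=
  Finsupp.filter (· ∈ E) x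

/-- A (Banach) space with a bimonotone Schauder basis, modelled on the linear span of the
basis: the space of finitely supported real sequences endowed with a norm `N` for which
restrictions to intervals have norm at most the norm of the vector. -/
structure BmBasis where
  N : (ℕ →₀ ℝ) → ℝ
  norm_nonneg : ∀ x, 0 ≤ N x
  norm_eq_zero_iff : ∀ x, N x = 0 ↔ x = 0
  norm_add_le : ∀ x y, N (x + y) ≤ N x + N y
  norm_smul : ∀ (a : ℝ) (x), N (a • x) = |a| * N x
  bimono : ∀ (x : ℕ →₀ ℝ) (a b : ℕ), N (restrictF x (Finset.Icc a b)) ≤ N x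

/-- A (finite) block sequence: nonzero vectors with successive supports. -/
def IsBlockSeq {k : ℕ} (x : Fin k → (ℕ →₀ ℝ)) : Prop :=
  (∀ i, x i ≠ 0) ∧
  ∀ i j : Fin k, i < j → ∀ p ∈ (x i).support, ∀ q ∈ (x j).support, p < q

/-- A sequence of successive intervals `E₁ < E₂ < ... < E_n` of `ℕ`. -/
def IsSuccIntervals {n : ℕ} (E : Fin n → Finset ℕ) : Prop :=
  (∀ j, ∃ a b : ℕ, E j = Finset.Icc a b) ∧
  ∀ j j' : Fin n, j < j' → ∀ p ∈ E j, ∀ q ∈ E j', p < q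

open Finset

/-- A pair `(j, i)` with `i ∈ S j` is charged to `j` if `i` also lies in a later `S j'`
(then `i = max (S j)`), and to `i` otherwise (then `j` is the last index with `i ∈ S j`). -/
theorem Finset.sum_card_le_of_successive {ι α : Type*} [Fintype ι] [LinearOrder ι] [Fintype α]
    [PartialOrder α] (S : ι → Finset α)
    (hS : ∀ j j', j < j' → ∀ i ∈ S j, ∀ i' ∈ S j', i ≤ i') :
    ∑ j, #(S j) ≤ Fintype.card α + Fintype.card ι := by
  classical
  let charge : (Σ _ : ι, α) → α ⊕ ι := fun z =>
    if ∃ j', z.1 < j' ∧ z.2 ∈ S j' then .inr z.1 else .inl z.2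
  have hinj : Set.InjOn charge (univ.sigma S) := by
    rintro ⟨j, i⟩ hz ⟨j', i'⟩ hz' heq
    simp only [coe_sigma, Set.mem_sigma_iff, mem_coe, mem_univ, true_and] at hz hz'
    by_cases hlater : ∃ k, j < k ∧ i ∈ S k <;> by_cases hlater' : ∃ k, j' < k ∧ i' ∈ S k <;>
      simp only [charge, hlater, hlater', if_true, if_false, reduceCtorEq,
        Sum.inr.injEq, Sum.inl.injEq] at heq
    · subst heq
      obtain ⟨k, hjk, hik⟩ := hlater
      obtain ⟨k', hjk', hik'⟩ := hlater'
      rw [le_antisymm (hS j k' hjk' i hz i' hik') (hS j k hjk i' hz' i hik)]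
    · subst heq
      rcases lt_trichotomy j j' with h | rfl | h
      · exact absurd ⟨j', h, hz'⟩ hlater
      · rfl
      · exact absurd ⟨j, h, hz⟩ hlater'
  calc ∑ j, #(S j) = #(univ.sigma S) := (card_sigma _ _).symm
    _ ≤ #(univ : Finset (α ⊕ ι)) := card_le_card_of_injOn charge (fun _ _ => mem_univ _) hinj
    _ = Fintype.card α + Fintype.card ι := by simp

theorem restrictF_smul (c : ℝ) (x : ℕ →₀ ℝ) (E : Finset ℕ) :
    restrictF (c • x) E = c • restrictF x E :=
  Finsupp.filter_smul

theorem restrictF_eq_zero_of_disjoint {x : ℕ →₀ ℝ} {E : Finset ℕ}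
    (h : Disjoint x.support E) : restrictF x E = 0 := by
  ext q
  simp only [restrictF, Finsupp.filter_apply, Finsupp.coe_zero, Pi.zero_apply, ite_eq_right_iff]
  intro hq
  by_contra hxq
  exact disjoint_left.mp h (Finsupp.mem_support_iff.mpr hxq) hq

theorem restrictF_sum {ι : Type*} (s : Finset ι) (x : ι → ℕ →₀ ℝ) (E : Finset ℕ) :
    restrictF (∑ i ∈ s, x i) E =
      ∑ i ∈ s with ¬Disjoint (x i).support E, restrictF (x i) E := by
  rw [restrictF, Finsupp.filter_sum, eq_comm]
  exact sum_filter_of_ne fun i _ hne h => hne (restrictF_eq_zero_of_disjoint h)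

namespace BmBasis

variable (B : BmBasis)

theorem norm_zero : B.N 0 = 0 := (B.norm_eq_zero_iff 0).mpr rfl

theorem norm_sum_le {ι : Type*} (s : Finset ι) (f : ι → ℕ →₀ ℝ) :
    B.N (∑ i ∈ s, f i) ≤ ∑ i ∈ s, B.N (f i) := by
  classical
  induction s using Finset.cons_induction with
  | empty => simp [B.norm_zero]
  | cons a s ha ih =>
    rw [sum_cons, sum_cons]
    exact (B.norm_add_le _ _).trans (by linarith)

theorem norm_restrictF_sum_le {ι : Type*} (s : Finset ι) (x : ι → ℕ →₀ ℝ) (a b : ℕ) :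
    B.N (restrictF (∑ i ∈ s, x i) (Icc a b)) ≤
      ∑ i ∈ s with ¬Disjoint (x i).support (Icc a b), B.N (x i) := by
  rw [restrictF_sum]
  exact (B.norm_sum_le _ _).trans (sum_le_sum fun i _ => B.bimono (x i) a b)

end BmBasis

theorem IsBlockSeq.le_of_meets_successive {k n : ℕ} {x : Fin k → ℕ →₀ ℝ} (hx : IsBlockSeq x)
    {E : Fin n → Finset ℕ} (hE : IsSuccIntervals E) {j j' : Fin n} (hjj' : j < j')
    {i i' : Fin k} (hi : ¬Disjoint (x i).support (E j)) (hi' : ¬Disjoint (x i').support (E j')) :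
    i ≤ i' := by
  obtain ⟨p, hp, hpE⟩ := not_disjoint_iff.mp hi
  obtain ⟨q, hq, hqE⟩ := not_disjoint_iff.mp hi'
  by_contra! hlt
  exact lt_asymm (hE.2 j j' hjj' p hpE q hqE) (hx.2 i' i hlt q hq p hp)

/-- if a normalized block sequence `(x₁,...,x_{n²})` in a space with a
bimonotone basis is 2-equivalent to the unit vector basis of `ℓ₁^{n²}`, then
`x = (1/n²)(x₁ + ... + x_{n²})` satisfies `‖x‖ ≥ 1/2` and `∑_{j=1}^n ‖E_j x‖ ≤ 2` for all
successive intervals `E₁ < ... < E_n`. -/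
theorem lemma1_glue_vector (B : BmBasis) (n : ℕ) (hn : 0 < n)
    (x : Fin (n ^ 2) → (ℕ →₀ ℝ)) (hblock : IsBlockSeq x)
    (hnorm : ∀ i, B.N (x i) = 1)
    (hl1 : ∀ a : Fin (n ^ 2) → ℝ, ∑ i, |a i| ≤ 2 * B.N (∑ i, a i • x i)) :
    (1 : ℝ) / 2 ≤ B.N (((n : ℝ) ^ 2)⁻¹ • ∑ i, x i) ∧
      ∀ E : Fin n → Finset ℕ, IsSuccIntervals E →
        ∑ j, B.N (restrictF (((n : ℝ) ^ 2)⁻¹ • ∑ i, x i) (E j)) ≤ 2 := by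
  set c : ℝ := ((n : ℝ) ^ 2)⁻¹
  have hc : 0 < c := by positivity
  refine ⟨?_, fun E hE => ?_⟩
  · have hcn : c * (n ^ 2 : ℕ) = 1 := by push_cast; exact inv_mul_cancel₀ (by positivity)
    have h := hl1 fun _ => c
    simp only [abs_of_pos hc, sum_const, card_univ, Fintype.card_fin, nsmul_eq_mul,
      ← smul_sum] at h
    linarith
  · let S : Fin n → Finset (Fin (n ^ 2)) := fun j => {i | ¬Disjoint (x i).support (E j)}
    have hS : ∑ j, #(S j) ≤ n ^ 2 + n := by
      simpa using sum_card_le_of_successive S fun j j' hjj' i hi i' hi' =>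
        hblock.le_of_meets_successive hE hjj' (mem_filter.mp hi).2 (mem_filter.mp hi').2
    have hSj : ∀ j, B.N (restrictF (c • ∑ i, x i) (E j)) ≤ c * #(S j) := fun j => by
      obtain ⟨a, b, hEj⟩ := hE.1 j
      rw [restrictF_smul, B.norm_smul, abs_of_pos hc]
      gcongr
      simpa [hnorm, S, hEj] using B.norm_restrictF_sum_le univ x a b
    have hn1 : (n : ℝ)⁻¹ ≤ 1 := inv_le_one_of_one_le₀ (by exact_mod_cast hn)
    calc ∑ j, B.N (restrictF (c • ∑ i, x i) (E j))
        ≤ c * ∑ j, (#(S j) : ℝ) := by rw [mul_sum]; exact sum_le_sum fun j _ => hSj j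
      _ ≤ c * (n ^ 2 + n : ℕ) := by gcongr; exact_mod_cast hS
      _ = 1 + (n : ℝ)⁻¹ := by simp only [c]; field_simp; push_cast; ring
      _ ≤ 2 := by linarith
end

section
/- Let U be a Banach space with a bimonotone basis, and suppose a normalized block sequence (x_1,...,x_{n²}) is 2-equivalent to the unit vector basis of c₀ of dimension n². For y ∈ U let ‖y‖_n = sup{|φ(y)| : φ ∈ U*, ‖φ‖*_n ≤ 1}, where ‖φ‖*_n = sup{∑_{j=1}^n ‖φ|_{E_j U}‖ : E_1 < ... < E_n intervals}. Then x = x_1 + ... + x_{n²} satisfies 1/2 ≤ ‖x‖_n ≤ ‖x‖ ≤ 2. -/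
/-- A bounded linear functional on the space. -/
def IsBddFunc (B : BmBasis) (φ : (ℕ →₀ ℝ) →ₗ[ℝ] ℝ) : Prop :=
  ∃ C : ℝ, ∀ x, |φ x| ≤ C * B.N x

/-- The norm of the restriction `φ|_{EU}` of a functional to the span of the basis
vectors indexed by `E`. -/
noncomputable def restFuncNorm (B : BmBasis) (φ : (ℕ →₀ ℝ) →ₗ[ℝ] ℝ) (E : Finset ℕ) : ℝ :=
  sSup { r : ℝ | ∃ x : ℕ →₀ ℝ, B.N x ≤ 1 ∧ x.support ⊆ E ∧ r = |φ x| }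

/-- The dual norm `‖φ‖*_n = sup {∑_{j=1}^n ‖φ|_{E_jU}‖ : E₁ < ... < E_n intervals}`. -/
noncomputable def dualNormN (B : BmBasis) (n : ℕ) (φ : (ℕ →₀ ℝ) →ₗ[ℝ] ℝ) : ℝ :=
  sSup { s : ℝ | ∃ E : Fin n → Finset ℕ, IsSuccIntervals E ∧
    s = ∑ j, restFuncNorm B φ (E j) }

/-- The predual norm `‖y‖_n = sup {|φ(y)| : φ ∈ U*, ‖φ‖*_n ≤ 1}`. -/
noncomputable def predualNormN (B : BmBasis) (n : ℕ) (y : ℕ →₀ ℝ) : ℝ :=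
  sSup { r : ℝ | ∃ φ : (ℕ →₀ ℝ) →ₗ[ℝ] ℝ, IsBddFunc B φ ∧ dualNormN B n φ ≤ 1 ∧ r = |φ y| }


-- ==================== auxiliary lemmas ====================

lemma BmBasis.norm_zero_s11 (B : BmBasis) : B.N 0 = 0 := by
  have := B.norm_smul 0 0; simpa using this

lemma restrictF_apply (x : ℕ →₀ ℝ) (E : Finset ℕ) (q : ℕ) :
    restrictF x E q = if q ∈ E then x q else 0 := by
  simp [restrictF, Finsupp.filter_apply]

lemma restrictF_eq_self {x : ℕ →₀ ℝ} {E : Finset ℕ} (h : x.support ⊆ E) :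
    restrictF x E = x := by
  ext q
  rw [restrictF_apply]
  split_ifs with hq
  · rfl
  · by_contra hne
    exact hq (h (Finsupp.mem_support_iff.2 fun h0 => hne h0.symm))

lemma restrictF_eq_zero {x : ℕ →₀ ℝ} {E : Finset ℕ} (h : ∀ p ∈ x.support, p ∉ E) :
    restrictF x E = 0 := by
  ext q
  rw [restrictF_apply]
  split_ifs with hq
  · by_contra hne
    exact h q (Finsupp.mem_support_iff.2 fun h0 => hne (h0 ▸ rfl)) hq
  · rfl

/-- restriction as a linear map -/
noncomputable def restrictL (E : Finset ℕ) : (ℕ →₀ ℝ) →ₗ[ℝ] (ℕ →₀ ℝ) where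
  toFun x := restrictF x E
  map_add' x y := by
    ext q; simp only [restrictF_apply, Finsupp.add_apply]; split_ifs <;> simp
  map_smul' c x := by
    ext q
    simp only [restrictF_apply, Finsupp.smul_apply, RingHom.id_apply]
    split_ifs <;> simp

@[simp] lemma restrictL_apply (E : Finset ℕ) (x : ℕ →₀ ℝ) :
    restrictL E x = restrictF x E := rfl

/-- Hahn–Banach: a norming functional. -/
lemma exists_norming (B : BmBasis) (v : ℕ →₀ ℝ) (hv : v ≠ 0) (hN : B.N v = 1) :
    ∃ g : (ℕ →₀ ℝ) →ₗ[ℝ] ℝ, g v = 1 ∧ ∀ y, |g y| ≤ B.N y := by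
  obtain ⟨g, hg1, hg2⟩ := exists_extension_of_le_sublinear
    (LinearPMap.mkSpanSingleton v (1 : ℝ) hv) B.N
    (fun c hc x => by rw [B.norm_smul, abs_of_pos hc])
    B.norm_add_le
    (by
      rintro ⟨z, hz⟩
      rcases Submodule.mem_span_singleton.1 hz with ⟨c, hc⟩
      have hz2 : (⟨z, hz⟩ : (LinearPMap.mkSpanSingleton v (1:ℝ) hv).domain)
          = ⟨c • v, by rw [hc]; exact hz⟩ := Subtype.ext hc.symm
      rw [hz2, LinearPMap.mkSpanSingleton'_apply]
      have hcv : B.N (c • v) = |c| := by rw [B.norm_smul, hN, mul_one]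
      calc (c • (1:ℝ)) = c := by rw [smul_eq_mul, mul_one]
        _ ≤ |c| := le_abs_self c
        _ = B.N (c • v) := hcv.symm)
  refine ⟨g, ?_, ?_⟩
  · have := hg1 ⟨v, Submodule.mem_span_singleton_self v⟩
    rw [LinearPMap.mkSpanSingleton_apply] at this
    exact this
  · intro y
    rw [abs_le]
    refine ⟨?_, hg2 y⟩
    have h2 := hg2 (-y)
    have hny : B.N (-y) = B.N y := by
      have := B.norm_smul (-1) y; simpa using this
    rw [map_neg, hny] at h2
    linarith

lemma restFuncNorm_le (B : BmBasis) (φ : (ℕ →₀ ℝ) →ₗ[ℝ] ℝ) (E : Finset ℕ) {C : ℝ}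
    (hC : 0 ≤ C) (h : ∀ w : ℕ →₀ ℝ, B.N w ≤ 1 → w.support ⊆ E → |φ w| ≤ C) :
    restFuncNorm B φ E ≤ C := by
  apply Real.sSup_le _ hC
  rintro r ⟨w, hw1, hw2, rfl⟩
  exact h w hw1 hw2

lemma restFuncNorm_empty (B : BmBasis) (φ : (ℕ →₀ ℝ) →ₗ[ℝ] ℝ) :
    restFuncNorm B φ (Finset.Icc 1 0) = 0 := by
  have hE : (Finset.Icc 1 0 : Finset ℕ) = ∅ := by simp
  have : { r : ℝ | ∃ x : ℕ →₀ ℝ, B.N x ≤ 1 ∧ x.support ⊆ Finset.Icc 1 0 ∧ r = |φ x| }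
      = {0} := by
    ext r
    constructor
    · rintro ⟨w, _, hw2, rfl⟩
      have : w = 0 := by
        rw [← Finsupp.support_eq_empty]
        rw [hE] at hw2
        exact Finset.subset_empty.1 hw2
      simp [this]
    · rintro rfl
      exact ⟨0, by simp [B.norm_zero_s11], by simp, by simp⟩
  rw [restFuncNorm, this, csSup_singleton]

lemma bddAbove_restSet (B : BmBasis) {φ : (ℕ →₀ ℝ) →ₗ[ℝ] ℝ} {C : ℝ}
    (hφ : ∀ x, |φ x| ≤ C * B.N x) (hC : 0 ≤ C) (E : Finset ℕ) :
    ∀ r ∈ { r : ℝ | ∃ x : ℕ →₀ ℝ, B.N x ≤ 1 ∧ x.support ⊆ E ∧ r = |φ x| }, r ≤ C := by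
  rintro r ⟨w, hw1, _, rfl⟩
  calc |φ w| ≤ C * B.N w := hφ w
    _ ≤ C * 1 := by
        apply mul_le_mul_of_nonneg_left hw1 hC
    _ = C := mul_one C

/-- Key duality lemma: if `‖φ‖*_n ≤ 1` then `|φ y| ≤ ‖y‖`. -/
lemma abs_le_norm_of_dualNorm_le (B : BmBasis) {n : ℕ} (hn : 0 < n)
    {φ : (ℕ →₀ ℝ) →ₗ[ℝ] ℝ} (hφ : IsBddFunc B φ) (hd : dualNormN B n φ ≤ 1)
    (y : ℕ →₀ ℝ) : |φ y| ≤ B.N y := by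
  obtain ⟨C, hC⟩ := hφ
  set C' : ℝ := max C 0 with hC'def
  have hC'0 : 0 ≤ C' := le_max_right _ _
  have hC' : ∀ x, |φ x| ≤ C' * B.N x := fun x =>
    (hC x).trans (mul_le_mul_of_nonneg_right (le_max_left _ _) (B.norm_nonneg x))
  by_cases hy : y = 0
  · simp [hy, B.norm_zero_s11]
  have hNy : 0 < B.N y := by
    rcases lt_or_eq_of_le (B.norm_nonneg y) with h | h
    · exact h
    · exact absurd ((B.norm_eq_zero_iff y).1 h.symm) hy
  set z : ℕ →₀ ℝ := (B.N y)⁻¹ • y with hzdef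
  have hNz : B.N z = 1 := by
    rw [hzdef, B.norm_smul, abs_of_pos (inv_pos.2 hNy), inv_mul_cancel₀ hNy.ne']
  set M : ℕ := y.support.sup id with hM
  have hzsupp : z.support ⊆ Finset.Icc 0 M := by
    intro p hp
    have hp' : p ∈ y.support := by
      rw [hzdef] at hp
      exact Finsupp.support_smul hp
    simp only [Finset.mem_Icc]
    exact ⟨Nat.zero_le _, Finset.le_sup (f := id) hp'⟩
  -- the element |φ z| belongs to the restriction-norm set
  have hmem : |φ z| ∈ { r : ℝ | ∃ x : ℕ →₀ ℝ, B.N x ≤ 1 ∧ x.support ⊆ Finset.Icc 0 M ∧ r = |φ x| } :=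
    ⟨z, le_of_eq hNz, hzsupp, rfl⟩
  have h1 : |φ z| ≤ restFuncNorm B φ (Finset.Icc 0 M) :=
    le_csSup ⟨C', bddAbove_restSet B hC' hC'0 _⟩ hmem
  -- the restriction norm is at most the dual norm
  set E : Fin n → Finset ℕ := fun j => if j = ⟨0, hn⟩ then Finset.Icc 0 M else Finset.Icc 1 0
    with hEdef
  have hEsucc : IsSuccIntervals E := by
    constructor
    · intro j
      by_cases h : j = ⟨0, hn⟩
      · exact ⟨0, M, by simp [hEdef, h]⟩
      · exact ⟨1, 0, by simp [hEdef, h]⟩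
    · intro j j' hjj' p hp q hq
      have hj' : j' ≠ ⟨0, hn⟩ := by
        intro h
        rw [h] at hjj'
        exact absurd hjj' (by simp [Fin.lt_def])
      rw [hEdef] at hq
      simp only [hj', if_neg, if_false] at hq
      simp at hq
  have hsum : ∑ j, restFuncNorm B φ (E j) = restFuncNorm B φ (Finset.Icc 0 M) := by
    rw [Fintype.sum_eq_single (⟨0, hn⟩ : Fin n)]
    · simp [hEdef]
    · intro j hj
      simp only [hEdef, if_neg hj]
      exact restFuncNorm_empty B φ
  have hmem2 : restFuncNorm B φ (Finset.Icc 0 M) ∈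
      { s : ℝ | ∃ E : Fin n → Finset ℕ, IsSuccIntervals E ∧
        s = ∑ j, restFuncNorm B φ (E j) } := ⟨E, hEsucc, hsum.symm⟩
  have hbdd2 : BddAbove { s : ℝ | ∃ E : Fin n → Finset ℕ, IsSuccIntervals E ∧
      s = ∑ j, restFuncNorm B φ (E j) } := by
    refine ⟨n * C', ?_⟩
    rintro s ⟨E', _, rfl⟩
    calc ∑ j, restFuncNorm B φ (E' j) ≤ ∑ _j : Fin n, C' := by
          apply Finset.sum_le_sum
          intro j _
          exact restFuncNorm_le B φ (E' j) hC'0 (fun w hw1 hw2 =>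
            bddAbove_restSet B hC' hC'0 (E' j) _ ⟨w, hw1, hw2, rfl⟩)
      _ = n * C' := by simp [mul_comm]
  have h2 : restFuncNorm B φ (Finset.Icc 0 M) ≤ dualNormN B n φ := le_csSup hbdd2 hmem2
  have h3 : |φ z| ≤ 1 := h1.trans (h2.trans hd)
  have hyz : y = B.N y • z := by
    rw [hzdef, smul_smul, mul_inv_cancel₀ hNy.ne', one_smul]
  calc |φ y| = |φ (B.N y • z)| := by rw [← hyz]
    _ = B.N y * |φ z| := by rw [map_smul, smul_eq_mul, abs_mul, abs_of_pos hNy]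
    _ ≤ B.N y * 1 := mul_le_mul_of_nonneg_left h3 hNy.le
    _ = B.N y := mul_one _

/-- Combinatorial lemma: overlapping structure bounds the total count. -/
lemma sum_card_le {m n : ℕ} (S : Fin n → Finset (Fin m))
    (hmax : ∀ j j' : Fin n, j < j' → ∀ i, i ∈ S j → i ∈ S j' → ∀ i'' ∈ S j, i'' ≤ i) :
    ∑ j, (S j).card ≤ m + n := by
  classical
  set U : Fin n → Finset (Fin m) :=
    fun j => (S j).filter (fun i => ∀ j', j < j' → i ∉ S j') with hU
  have hUsub : ∀ j, U j ⊆ S j := fun j => Finset.filter_subset _ _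
  have hcard : ∀ j, (S j).card ≤ (U j).card + 1 := by
    intro j
    have h1 : (S j \ U j).card ≤ 1 := by
      rw [Finset.card_le_one]
      intro p hp q hq
      rw [Finset.mem_sdiff] at hp hq
      have hp2 : ∃ j', j < j' ∧ p ∈ S j' := by
        by_contra h
        push_neg at h
        exact hp.2 (Finset.mem_filter.2 ⟨hp.1, h⟩)
      have hq2 : ∃ j', j < j' ∧ q ∈ S j' := by
        by_contra h
        push_neg at h
        exact hq.2 (Finset.mem_filter.2 ⟨hq.1, h⟩)
      obtain ⟨j1, hj1, hp3⟩ := hp2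
      obtain ⟨j2, hj2, hq3⟩ := hq2
      have h4 := hmax j j1 hj1 p hp.1 hp3 q hq.1
      have h5 := hmax j j2 hj2 q hq.1 hq3 p hp.1
      exact le_antisymm h5 h4
    have hU2 : S j = U j ∪ (S j \ U j) := by
      rw [Finset.union_sdiff_of_subset (hUsub j)]
    calc (S j).card = (U j ∪ (S j \ U j)).card := by rw [← hU2]
      _ ≤ (U j).card + (S j \ U j).card := Finset.card_union_le _ _
      _ ≤ (U j).card + 1 := by omega
  have hdisj : ∀ j ∈ (Finset.univ : Finset (Fin n)), ∀ j' ∈ Finset.univ, j ≠ j' →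
      Disjoint (U j) (U j') := by
    intro j _ j' _ hne
    rw [Finset.disjoint_left]
    intro i hi hi'
    rcases lt_or_gt_of_ne hne with h | h
    · exact (Finset.mem_filter.1 hi).2 j' h (hUsub j' hi')
    · exact (Finset.mem_filter.1 hi').2 j h (hUsub j hi)
  have hUcard : ∑ j, (U j).card ≤ m := by
    rw [← Finset.card_biUnion hdisj]
    calc (Finset.univ.biUnion U).card ≤ (Finset.univ : Finset (Fin m)).card :=
        Finset.card_le_card (Finset.subset_univ _)
      _ = m := by simp
  calc ∑ j, (S j).card ≤ ∑ j, ((U j).card + 1) := Finset.sum_le_sum (fun j _ => hcard j)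
    _ = (∑ j, (U j).card) + n := by rw [Finset.sum_add_distrib]; simp
    _ ≤ m + n := by omega

/-- if a normalized block sequence `(x₁,...,x_{n²})` in a space with a
bimonotone basis is 2-equivalent to the unit vector basis of `c₀` of dimension `n²`, then
`x = x₁ + ... + x_{n²}` satisfies `1/2 ≤ ‖x‖_n ≤ ‖x‖ ≤ 2`. -/
theorem lemma3_c0_glue_vector (B : BmBasis) (n : ℕ) (hn : 0 < n)
    (x : Fin (n ^ 2) → (ℕ →₀ ℝ)) (hblock : IsBlockSeq x)
    (hnorm : ∀ i, B.N (x i) = 1)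
    (hc0 : ∀ a : Fin (n ^ 2) → ℝ, (∀ i, |a i| ≤ 1) → B.N (∑ i, a i • x i) ≤ 2) :
    (1 : ℝ) / 2 ≤ predualNormN B n (∑ i, x i) ∧
      predualNormN B n (∑ i, x i) ≤ B.N (∑ i, x i) ∧
      B.N (∑ i, x i) ≤ 2 := by
  classical
  have hX2 : B.N (∑ i, x i) ≤ 2 := by
    have := hc0 (fun _ => 1) (fun i => by norm_num)
    simpa using this
  have hmid : predualNormN B n (∑ i, x i) ≤ B.N (∑ i, x i) := by
    apply Real.sSup_le _ (B.norm_nonneg _)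
    rintro r ⟨ψ, hb, hd, rfl⟩
    exact abs_le_norm_of_dualNorm_le B hn hb hd _
  refine ⟨?_, hmid, hX2⟩
  have hne : ∀ i : Fin (n^2), (x i).support.Nonempty :=
    fun i => Finsupp.support_nonempty_iff.2 (hblock.1 i)
  set a : Fin (n^2) → ℕ := fun i => (x i).support.min' (hne i) with ha
  set b : Fin (n^2) → ℕ := fun i => (x i).support.max' (hne i) with hb
  have hsubI : ∀ i, (x i).support ⊆ Finset.Icc (a i) (b i) := fun i p hp =>
    Finset.mem_Icc.2 ⟨Finset.min'_le _ _ hp, Finset.le_max' _ _ hp⟩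
  have hblt : ∀ i i' : Fin (n^2), i < i' → b i < a i' := fun i i' h =>
    hblock.2 i i' h _ (Finset.max'_mem _ _) _ (Finset.min'_mem _ _)
  choose g hg1 hg2 using fun i => exists_norming B (x i) (hblock.1 i) (hnorm i)
  have hn1 : (1:ℝ) ≤ (n:ℝ) := by exact_mod_cast hn
  have hn2 : (0:ℝ) < (n:ℝ)^2 := by positivity
  set c : ℝ := 1 / (2 * (n:ℝ)^2) with hc
  have hcpos : 0 < c := by rw [hc]; positivity
  set φ : (ℕ →₀ ℝ) →ₗ[ℝ] ℝ :=
    c • ∑ i, (g i).comp (restrictL (Finset.Icc (a i) (b i))) with hφ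
  have hφapp : ∀ y, φ y = c * ∑ i, g i (restrictF y (Finset.Icc (a i) (b i))) := by
    intro y
    rw [hφ]
    simp [LinearMap.sum_apply]
  have hXi : ∀ i, restrictF (∑ i', x i') (Finset.Icc (a i) (b i)) = x i := by
    intro i
    have hmap : restrictL (Finset.Icc (a i) (b i)) (∑ i', x i')
        = ∑ i', restrictL (Finset.Icc (a i) (b i)) (x i') := map_sum _ _ _
    rw [← restrictL_apply, hmap, Fintype.sum_eq_single i]
    · exact restrictF_eq_self (hsubI i)
    · intro i' hi'
      rw [restrictL_apply]
      apply restrictF_eq_zero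
      intro p hp hmem
      rw [Finset.mem_Icc] at hmem
      rcases lt_or_gt_of_ne hi' with h | h
      · have := hblock.2 i' i h p hp (a i) (Finset.min'_mem _ _)
        omega
      · have := hblock.2 i i' h (b i) (Finset.max'_mem _ _) p hp
        omega
  have hφX : φ (∑ i, x i) = 1/2 := by
    rw [hφapp]
    rw [Finset.sum_congr rfl (fun i _ => by rw [hXi i, hg1 i])]
    rw [Finset.sum_const, Finset.card_univ, nsmul_eq_mul, mul_one, Fintype.card_fin, hc]
    push_cast
    field_simp
  have hφbd : ∀ y, |φ y| ≤ B.N y := by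
    intro y
    rw [hφapp, abs_mul, abs_of_pos hcpos]
    calc c * |∑ i, g i (restrictF y (Finset.Icc (a i) (b i)))|
        ≤ c * ∑ i, |g i (restrictF y (Finset.Icc (a i) (b i)))| :=
          mul_le_mul_of_nonneg_left (Finset.abs_sum_le_sum_abs _ _) hcpos.le
      _ ≤ c * ∑ _i : Fin (n^2), B.N y :=
          mul_le_mul_of_nonneg_left (Finset.sum_le_sum fun i _ =>
            (hg2 i _).trans (B.bimono y (a i) (b i))) hcpos.le
      _ = c * ((n:ℝ)^2 * B.N y) := by
          rw [Finset.sum_const, Finset.card_univ, nsmul_eq_mul, Fintype.card_fin]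
          push_cast
          ring
      _ ≤ B.N y := by
          rw [hc]
          have hNy := B.norm_nonneg y
          rw [div_mul_eq_mul_div, one_mul]
          rw [div_le_iff₀ (by positivity)]
          nlinarith
  have hφbdd : IsBddFunc B φ := ⟨1, fun y => (hφbd y).trans (by linarith [B.norm_nonneg y])⟩
  have hdual : dualNormN B n φ ≤ 1 := by
    apply Real.sSup_le _ zero_le_one
    rintro s ⟨E, hE, rfl⟩
    set S : Fin n → Finset (Fin (n^2)) :=
      fun j => Finset.univ.filter (fun i => (Finset.Icc (a i) (b i) ∩ E j).Nonempty) with hS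
    have hperj : ∀ j, restFuncNorm B φ (E j) ≤ c * (S j).card := by
      intro j
      apply restFuncNorm_le B φ (E j) (by positivity)
      intro w hw1 hw2
      rw [hφapp, abs_mul, abs_of_pos hcpos]
      apply mul_le_mul_of_nonneg_left _ hcpos.le
      calc |∑ i, g i (restrictF w (Finset.Icc (a i) (b i)))|
          ≤ ∑ i, |g i (restrictF w (Finset.Icc (a i) (b i)))| :=
            Finset.abs_sum_le_sum_abs _ _
        _ ≤ ∑ i, (if i ∈ S j then (1:ℝ) else 0) := by
            apply Finset.sum_le_sum
            intro i _
            by_cases hi : i ∈ S j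
            · rw [if_pos hi]
              exact (hg2 i _).trans ((B.bimono w (a i) (b i)).trans hw1)
            · rw [if_neg hi]
              have hint : restrictF w (Finset.Icc (a i) (b i)) = 0 := by
                apply restrictF_eq_zero
                intro p hp hpI
                apply hi
                rw [hS]
                simp only [Finset.mem_filter]
                exact ⟨Finset.mem_univ i, ⟨p, Finset.mem_inter.2 ⟨hpI, hw2 hp⟩⟩⟩
              rw [hint, map_zero]
              simp
        _ = ((S j).card : ℝ) := by
            rw [Finset.sum_ite_mem, Finset.univ_inter, Finset.sum_const, nsmul_eq_mul, mul_one]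
    have hmaxS : ∀ j j' : Fin n, j < j' → ∀ i, i ∈ S j → i ∈ S j' → ∀ i'' ∈ S j, i'' ≤ i := by
      intro j j' hjj' i hij hij' i'' hi''
      by_contra hlt
      push_neg at hlt
      rw [hS] at hij' hi''
      obtain ⟨q, hq⟩ := (Finset.mem_filter.1 hij').2
      obtain ⟨p, hp⟩ := (Finset.mem_filter.1 hi'').2
      rw [Finset.mem_inter] at hq hp
      have hpq := hE.2 j j' hjj' p hp.2 q hq.2
      have h1 : q ≤ b i := (Finset.mem_Icc.1 hq.1).2
      have h2 : a i'' ≤ p := (Finset.mem_Icc.1 hp.1).1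
      have h3 : b i < a i'' := hblt i i'' hlt
      omega
    have hsumcard : (∑ j, ((S j).card : ℝ)) ≤ (n:ℝ)^2 + n := by
      have h := sum_card_le S hmaxS
      have : ((∑ j, (S j).card : ℕ) : ℝ) ≤ (((n^2 + n : ℕ)) : ℝ) := by exact_mod_cast h
      push_cast at this
      push_cast
      linarith
    calc ∑ j, restFuncNorm B φ (E j) ≤ ∑ j, c * ((S j).card : ℝ) :=
        Finset.sum_le_sum (fun j _ => hperj j)
      _ = c * ∑ j, ((S j).card : ℝ) := by rw [← Finset.mul_sum]
      _ ≤ c * ((n:ℝ)^2 + n) := mul_le_mul_of_nonneg_left hsumcard hcpos.le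
      _ ≤ 1 := by
          rw [hc, div_mul_eq_mul_div, one_mul, div_le_one (by positivity)]
          nlinarith
  have hbddP : BddAbove { r : ℝ | ∃ ψ : (ℕ →₀ ℝ) →ₗ[ℝ] ℝ, IsBddFunc B ψ ∧
      dualNormN B n ψ ≤ 1 ∧ r = |ψ (∑ i, x i)| } := by
    refine ⟨B.N (∑ i, x i), ?_⟩
    rintro r ⟨ψ, h1, h2, rfl⟩
    exact abs_le_norm_of_dualNorm_le B hn h1 h2 _
  have hmemP : (1:ℝ)/2 ∈ { r : ℝ | ∃ ψ : (ℕ →₀ ℝ) →ₗ[ℝ] ℝ, IsBddFunc B ψ ∧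
      dualNormN B n ψ ≤ 1 ∧ r = |ψ (∑ i, x i)| } :=
    ⟨φ, hφbdd, hdual, by rw [hφX, abs_of_nonneg] <;> norm_num⟩
  exact le_csSup hbddP hmemP
end

section
/- For any hereditary, spreading, compact family F of finite subsets of ℕ considered as a tree on ℕ (via strictly increasing enumerations), the tree order o(F) equals the Cantor–Bendixson index ι(F). -/
/-- A tree on `S`: a set of nonempty finite sequences closed under nonempty initial segments. -/
def IsTree {S : Type*} (T : Set (List S)) : Prop :=
  [] ∉ T ∧ ∀ (l : List S) (x : S), l ++ [x] ∈ T → l ≠ [] → l ∈ T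

/-- A tree is well-founded if it has no infinite branch. -/
def WellFoundedTree {S : Type*} (T : Set (List S)) : Prop :=
  ¬ ∃ f : ℕ → S, ∀ k : ℕ, (List.ofFn fun i : Fin (k + 1) => f i) ∈ T

/-- The derived tree `D(T) = {(x₁,...,x_k) : (x₁,...,x_k,x) ∈ T for some x}`. -/
def Dtree {S : Type*} (T : Set (List S)) : Set (List S) :=
  { l | l ≠ [] ∧ ∃ x : S, l ++ [x] ∈ T }

/-- Transfinite iteration of the tree derivative. -/
noncomputable def DIter {S : Type*} (T : Set (List S)) (o : Ordinal) : Set (List S) :=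
  Ordinal.limitRecOn o T (fun _ ih => Dtree ih)
    (fun o _ ih => ⋂ (o' : Ordinal), ⋂ (h : o' < o), ih o' h)

/-- The order of a tree: `o(T) = inf {α : D^α(T) = ∅}`. -/
noncomputable def treeOrder {S : Type*} (T : Set (List S)) : Ordinal :=
  sInf { α : Ordinal | DIter T α = ∅ }

/-- Transfinitely iterated Cantor–Bendixson derivative of a subset of the Cantor space
`2^ℕ`: at each step keep only the limit points, at limit stages take intersections. -/
noncomputable def CBIter (A : Set (ℕ → Bool)) (o : Ordinal) : Set (ℕ → Bool) :=
  Ordinal.limitRecOn o A (fun _ ih => { x | x ∈ closure (ih \ {x}) })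
    (fun o _ ih => ⋂ (o' : Ordinal), ⋂ (h : o' < o), ih o' h)

/-- The Cantor–Bendixson index `ι(A) = inf {α : A^{(α+1)} = ∅}`. -/
noncomputable def CBIndex (A : Set (ℕ → Bool)) : Ordinal :=
  sInf { α : Ordinal | CBIter A (α + 1) = ∅ }

/-- The tree on `ℕ` associated to a family of finite subsets of `ℕ`, via strictly
increasing enumerations of its nonempty members. -/
def familyTree (𝒜 : Set (Finset ℕ)) : Set (List ℕ) :=
  { l | l ≠ [] ∧ l.Chain' (· < ·) ∧ l.toFinset ∈ 𝒜 }

/-!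
Both derivatives are governed by one operation on families: `F ∈ 𝒞'` iff `insert n F ∈ 𝒞` for
infinitely many `n`. If `𝒞` is closed and hereditary, the limit points of `𝒞` in `2^ℕ` are exactly
the members of `𝒞'`, since a finite set can only be approximated by sets containing it together
with arbitrarily large new elements. If `𝒞` is spreading, a sequence in `T_𝒞` has a one-point
extension iff it has arbitrarily large ones, so `D(T_𝒞) = T_𝒞'`. Regularity (hereditary,
spreading, closed) passes to `𝒞'` and to intersections, so transfinite induction identifies
`D^α(T_𝒜)` with `T_{𝒜^(α)}` and the `α`-th Cantor–Bendixson derivative with `𝒜^(α)`. For a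
hereditary spreading family, both `T_𝒞 = ∅` and `𝒞' = ∅` say that `𝒞` contains no singleton; hence
`D^α(T_𝒜) = ∅` iff the `(α + 1)`-st Cantor–Bendixson derivative of `𝒜` is empty.
-/

open Filter Topology

section TransfiniteIteration

variable {α β : Type*}

noncomputable def transIter (f : Set α → Set α) (s : Set α) (o : Ordinal) : Set α :=
  Ordinal.limitRecOn o s (fun _ ih => f ih)
    (fun o _ ih => ⋂ (o' : Ordinal), ⋂ (h : o' < o), ih o' h)

@[simp]
theorem transIter_zero (f : Set α → Set α) (s : Set α) : transIter f s 0 = s :=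
  Ordinal.limitRecOn_zero ..

@[simp]
theorem transIter_add_one (f : Set α → Set α) (s : Set α) (o : Ordinal) :
    transIter f s (o + 1) = f (transIter f s o) :=
  Ordinal.limitRecOn_add_one ..

theorem transIter_limit (f : Set α → Set α) (s : Set α) {o : Ordinal}
    (ho : Order.IsSuccLimit o) : transIter f s o = ⋂₀ (transIter f s '' Set.Iio o) := by
  rw [Set.sInter_image]
  exact Ordinal.limitRecOn_limit _ _ _ _ ho

theorem transIter_invariant {f : Set α → Set α} {P : Set α → Prop}
    (hf : ∀ s, P s → P (f s))
    (hsInter : ∀ S : Set (Set α), S.Nonempty → (∀ t ∈ S, P t) → P (⋂₀ S))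
    {s : Set α} (hs : P s) (o : Ordinal) : P (transIter f s o) := by
  induction o using Ordinal.limitRecOn with
  | zero => simpa using hs
  | add_one o ih => simpa using hf _ ih
  | limit o ho ih =>
    rw [transIter_limit f s ho]
    exact hsInter _ (Set.Nonempty.image _ ⟨0, ho.pos⟩) (Set.forall_mem_image.2 ih)

theorem map_transIter {f : Set α → Set α} {g : Set β → Set β} {Φ : Set α → Set β}
    {P : Set α → Prop} (hf : ∀ s, P s → P (f s))
    (hsInter : ∀ S : Set (Set α), S.Nonempty → (∀ t ∈ S, P t) → P (⋂₀ S))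
    (hΦf : ∀ s, P s → Φ (f s) = g (Φ s))
    (hΦsInter : ∀ S : Set (Set α), S.Nonempty → Φ (⋂₀ S) = ⋂₀ (Φ '' S))
    {s : Set α} (hs : P s) (o : Ordinal) : Φ (transIter f s o) = transIter g (Φ s) o := by
  induction o using Ordinal.limitRecOn with
  | zero => simp
  | add_one o ih => simp [hΦf _ (transIter_invariant hf hsInter hs o), ih]
  | limit o ho ih =>
    rw [transIter_limit f s ho, transIter_limit g (Φ s) ho,
      hΦsInter _ (Set.Nonempty.image _ ⟨0, ho.pos⟩), Set.image_image]
    exact congrArg _ (Set.image_congr ih)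

end TransfiniteIteration

theorem derivedSet_eq_setOf_mem_closure {X : Type*} [TopologicalSpace X] (A : Set X) :
    derivedSet A = {x | x ∈ closure (A \ {x})} := by
  ext x
  rw [mem_derivedSet, accPt_principal_iff_clusterPt]
  exact mem_closure_iff_clusterPt.symm

theorem DIter_eq_transIter {S : Type*} (T : Set (List S)) : DIter T = transIter Dtree T := rfl

theorem CBIter_eq_transIter (A : Set (ℕ → Bool)) : CBIter A = transIter derivedSet A := by
  funext o
  simp only [CBIter, transIter, derivedSet_eq_setOf_mem_closure]

section Families

variable {𝒞 : Set (Finset ℕ)}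

def charFun (F : Finset ℕ) : ℕ → Bool := fun n => decide (n ∈ F)

theorem charFun_injective : Function.Injective charFun := fun F G h =>
  Finset.ext fun n => by simpa [charFun] using congrFun h n

theorem eventually_forall_mem_lt (F : Finset ℕ) : ∀ᶠ n in atTop, ∀ a ∈ F, a < n :=
  (eventually_all_finset F).2 fun a _ => eventually_gt_atTop a

theorem tendsto_charFun_insert (F : Finset ℕ) :
    Tendsto (fun n => charFun (insert n F)) atTop (𝓝 (charFun F)) :=
  tendsto_pi_nhds.2 fun i => tendsto_const_nhds.congr' <|
    (eventually_gt_atTop i).mono fun n hn => by simp [charFun, hn.ne]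

theorem eventually_forall_le_eq (x : ℕ → Bool) (M : ℕ) : ∀ᶠ y in 𝓝 x, ∀ i ≤ M, y i = x i :=
  (Set.finite_Iic M).eventually_all.2 fun i _ => by
    simpa [nhds_discrete] using (continuous_apply i).tendsto x

theorem subset_and_exists_lt_mem_of_charFun_eqOn {F G : Finset ℕ} {M : ℕ}
    (hFM : ∀ a ∈ F, a < M) (hne : charFun G ≠ charFun F)
    (h : ∀ i ≤ M, charFun G i = charFun F i) : F ⊆ G ∧ ∃ n ∈ G, M < n := by
  have hmem : ∀ i ≤ M, i ∈ G ↔ i ∈ F := by simpa [charFun] using h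
  refine ⟨fun a ha => (hmem a (hFM a ha).le).2 ha, ?_⟩
  by_contra! hGM
  exact hne <| congrArg charFun <| Finset.ext fun i =>
    ⟨fun hi => (hmem i (hGM i hi)).1 hi, fun hi => (hmem i (hFM i hi).le).2 hi⟩

def derivedFamily (𝒞 : Set (Finset ℕ)) : Set (Finset ℕ) :=
  {F | ∃ᶠ n in atTop, insert n F ∈ 𝒞}

theorem IsHereditary.derivedFamily (h : IsHereditary 𝒞) : IsHereditary (derivedFamily 𝒞) :=
  fun _ hF _ hGF => hF.mono fun n hn => h _ hn _ (Finset.insert_subset_insert n hGF)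

theorem IsSpreading.insert_image_mem (h : IsSpreading 𝒞) {F : Finset ℕ} {f : ℕ → ℕ} {x y : ℕ}
    (hx : insert x F ∈ 𝒞) (hFx : ∀ a ∈ F, a < x) (hxy : x ≤ y) (hfy : ∀ a ∈ F, f a < y)
    (hf : StrictMonoOn f F) (hfF : ∀ a ∈ F, a ≤ f a) : insert y (F.image f) ∈ 𝒞 := by
  have hg : ∀ a ∈ F, Function.update f x y a = f a := fun a ha =>
    Function.update_of_ne (hFx a ha).ne _ _
  have := h _ hx (Function.update f x y) ?_ ?_
  · rwa [Finset.image_insert, Function.update_self, Finset.image_congr hg] at this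
  · intro p hp q hq hpq
    rcases Finset.mem_insert.1 hp with rfl | hpF <;> rcases Finset.mem_insert.1 hq with rfl | hqF
    · exact absurd hpq (lt_irrefl _)
    · exact absurd hpq (hFx q hqF).not_gt
    · simpa [hg p hpF] using hfy p hpF
    · simpa [hg p hpF, hg q hqF] using hf hpF hqF hpq
  · intro p hp
    rcases Finset.mem_insert.1 hp with rfl | hpF
    · simpa using hxy
    · simpa [hg p hpF] using hfF p hpF

theorem IsSpreading.derivedFamily (h : IsSpreading 𝒞) : IsSpreading (derivedFamily 𝒞) :=
  fun F hF f hf hfF => (hF.and_eventually <| (eventually_forall_mem_lt F).and <|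
    eventually_forall_mem_lt (F.image f)).mono fun _ ⟨hm, hFm, hfm⟩ =>
      h.insert_image_mem hm hFm le_rfl (fun _ ha => hfm _ (Finset.mem_image_of_mem f ha))
        (fun _ hp _ hq => hf _ hp _ hq) hfF

theorem charImage_derivedFamily (hher : IsHereditary 𝒞) (hcl : IsClosed (charImage 𝒞)) :
    charImage (derivedFamily 𝒞) = derivedSet (charImage 𝒞) := by
  ext x
  constructor
  · rintro ⟨F, hF, rfl⟩
    rw [mem_derivedSet, accPt_iff_frequently]
    refine (tendsto_charFun_insert F).frequently <|
      (hF.and_eventually (eventually_forall_mem_lt F)).mono fun n ⟨hn, hnF⟩ => ⟨?_, _, hn, rfl⟩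
    exact charFun_injective.ne (Finset.insert_ne_self.2 fun h => (hnF n h).false)
  · intro hx
    obtain ⟨F, -, rfl⟩ := (isClosed_iff_derivedSet_subset _).1 hcl hx
    refine ⟨F, frequently_atTop'.2 fun N => ?_, rfl⟩
    obtain ⟨M, hFM, hNM⟩ := ((eventually_forall_mem_lt F).and (eventually_ge_atTop N)).exists
    obtain ⟨_, ⟨hne, G, hG, rfl⟩, hGF⟩ :=
      ((accPt_iff_frequently.1 hx).and_eventually (eventually_forall_le_eq _ M)).exists
    obtain ⟨hFG, n, hnG, hMn⟩ := subset_and_exists_lt_mem_of_charFun_eqOn hFM hne hGF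
    exact ⟨n, by omega, hher _ hG _ (Finset.insert_subset hnG hFG)⟩

theorem charImage_sInter {S : Set (Set (Finset ℕ))} (hS : S.Nonempty) :
    charImage (⋂₀ S) = ⋂₀ (charImage '' S) := by
  rw [Set.sInter_image, Set.sInter_eq_biInter]
  exact charFun_injective.injOn.image_biInter_eq hS

structure IsRegularFamily (𝒞 : Set (Finset ℕ)) : Prop where
  hereditary : IsHereditary 𝒞
  spreading : IsSpreading 𝒞
  isClosed : IsClosed (charImage 𝒞)

theorem IsRegularFamily.derivedFamily (h : IsRegularFamily 𝒞) :
    IsRegularFamily (derivedFamily 𝒞) where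
  hereditary := h.hereditary.derivedFamily
  spreading := h.spreading.derivedFamily
  isClosed := charImage_derivedFamily h.hereditary h.isClosed ▸ isClosed_derivedSet _

theorem IsRegularFamily.sInter {S : Set (Set (Finset ℕ))} (hS : S.Nonempty)
    (h : ∀ 𝒞 ∈ S, IsRegularFamily 𝒞) : IsRegularFamily (⋂₀ S) where
  hereditary F hF G hGF := Set.mem_sInter.2 fun 𝒞 h𝒞 => (h 𝒞 h𝒞).hereditary F (hF 𝒞 h𝒞) G hGF
  spreading F hF f hf hfF := Set.mem_sInter.2 fun 𝒞 h𝒞 => (h 𝒞 h𝒞).spreading F (hF 𝒞 h𝒞) f hf hfF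
  isClosed := charImage_sInter hS ▸
    isClosed_sInter (Set.forall_mem_image.2 fun 𝒞 h𝒞 => (h 𝒞 h𝒞).isClosed)

theorem isRegularFamily_transIter_derivedFamily (h : IsRegularFamily 𝒞) (o : Ordinal) :
    IsRegularFamily (transIter derivedFamily 𝒞 o) :=
  transIter_invariant (P := IsRegularFamily) (fun _ => IsRegularFamily.derivedFamily)
    (fun _ => IsRegularFamily.sInter) h o

end Families

section Trees

variable {𝒞 : Set (Finset ℕ)}

theorem familyTree_sInter {S : Set (Set (Finset ℕ))} (hS : S.Nonempty) :
    familyTree (⋂₀ S) = ⋂₀ (familyTree '' S) := by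
  ext l
  obtain ⟨𝒞, h𝒞⟩ := hS
  simp only [familyTree, Set.sInter_image, Set.mem_iInter, Set.mem_sInter, Set.mem_ofPred_eq]
  exact ⟨fun ⟨hl, hc, h⟩ _ _ => ⟨hl, hc, h _ ‹_›⟩,
    fun h => ⟨(h 𝒞 h𝒞).1, (h 𝒞 h𝒞).2.1, fun 𝒟 h𝒟 => (h 𝒟 h𝒟).2.2⟩⟩

theorem isChain_append_singleton_iff {l : List ℕ} {x : ℕ} :
    (l ++ [x]).IsChain (· < ·) ↔ l.IsChain (· < ·) ∧ ∀ a ∈ l.toFinset, a < x := by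
  simp [List.isChain_iff_pairwise, List.pairwise_append]

theorem mem_derivedFamily_of_insert_mem (h : IsSpreading 𝒞) {F : Finset ℕ} {x : ℕ}
    (hx : insert x F ∈ 𝒞) (hFx : ∀ a ∈ F, a < x) : F ∈ derivedFamily 𝒞 :=
  (eventually_ge_atTop x).frequently.mono fun y hy => by
    simpa using h.insert_image_mem (f := id) hx hFx hy (fun a ha => (hFx a ha).trans_le hy)
      (fun _ _ _ _ => id) (fun _ _ => le_rfl)

theorem Dtree_familyTree (h : IsSpreading 𝒞) :
    Dtree (familyTree 𝒞) = familyTree (derivedFamily 𝒞) := by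
  ext l
  constructor
  · rintro ⟨hl, x, -, hchain, hmem⟩
    obtain ⟨hc, hlx⟩ := isChain_append_singleton_iff.1 hchain
    exact ⟨hl, hc, mem_derivedFamily_of_insert_mem h (by simpa using hmem) hlx⟩
  · rintro ⟨hl, hc, hF⟩
    obtain ⟨x, hx, hlx⟩ := (hF.and_eventually (eventually_forall_mem_lt _)).exists
    exact ⟨hl, x, by simp, isChain_append_singleton_iff.2 ⟨hc, hlx⟩, by simpa using hx⟩

theorem familyTree_eq_empty_iff (h : IsHereditary 𝒞) : familyTree 𝒞 = ∅ ↔ ∀ n, {n} ∉ 𝒞 := by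
  simp only [Set.eq_empty_iff_forall_notMem]
  refine ⟨fun hT n hn => hT [n] ⟨by simp, List.isChain_singleton n, by simpa using hn⟩, ?_⟩
  rintro hn l ⟨hl, -, hmem⟩
  exact hn _ (h _ hmem _ (Finset.singleton_subset_iff.2 (List.mem_toFinset.2 (List.head_mem hl))))

theorem derivedFamily_eq_empty_iff (hher : IsHereditary 𝒞) (hspr : IsSpreading 𝒞) :
    derivedFamily 𝒞 = ∅ ↔ ∀ n, {n} ∉ 𝒞 := by
  simp only [Set.eq_empty_iff_forall_notMem]
  refine ⟨fun hD n hn => hD ∅ ?_, fun hn F hF => ?_⟩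
  · exact mem_derivedFamily_of_insert_mem hspr (x := n) (by simpa using hn) (by simp)
  · obtain ⟨m, hm⟩ := hF.exists
    exact hn m (hher _ hm _ (by simp))

end Trees

theorem DIter_familyTree {𝒜 : Set (Finset ℕ)} (h : IsRegularFamily 𝒜) (o : Ordinal) :
    DIter (familyTree 𝒜) o = familyTree (transIter derivedFamily 𝒜 o) := by
  rw [DIter_eq_transIter]
  exact (map_transIter (P := IsRegularFamily) (fun _ => IsRegularFamily.derivedFamily)
    (fun _ => IsRegularFamily.sInter) (fun _ h𝒞 => (Dtree_familyTree h𝒞.spreading).symm)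
    (fun _ => familyTree_sInter) h o).symm

theorem CBIter_charImage {𝒜 : Set (Finset ℕ)} (h : IsRegularFamily 𝒜) (o : Ordinal) :
    CBIter (charImage 𝒜) o = charImage (transIter derivedFamily 𝒜 o) := by
  rw [CBIter_eq_transIter]
  exact (map_transIter (P := IsRegularFamily) (fun _ => IsRegularFamily.derivedFamily)
    (fun _ => IsRegularFamily.sInter)
    (fun _ h𝒞 => charImage_derivedFamily h𝒞.hereditary h𝒞.isClosed)
    (fun _ => charImage_sInter) h o).symm

/-- for a hereditary, spreading, compact family `F` of finite subsets of
`ℕ`, the order of the associated tree equals the Cantor–Bendixson index of `F`. -/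
theorem treeOrder_eq_CBIndex (𝒜 : Set (Finset ℕ))
    (hher : IsHereditary 𝒜) (hspr : IsSpreading 𝒜)
    (hcpt : IsCompact (charImage 𝒜)) :
    treeOrder (familyTree 𝒜) = CBIndex (charImage 𝒜) := by
  have h𝒜 : IsRegularFamily 𝒜 := ⟨hher, hspr, hcpt.isClosed⟩
  have hempty (α : Ordinal) :
      DIter (familyTree 𝒜) α = ∅ ↔ CBIter (charImage 𝒜) (α + 1) = ∅ := by
    have hα := isRegularFamily_transIter_derivedFamily h𝒜 α
    rw [DIter_familyTree h𝒜, CBIter_charImage h𝒜, transIter_add_one, charImage,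
      Set.image_eq_empty, familyTree_eq_empty_iff hα.hereditary,
      derivedFamily_eq_empty_iff hα.hereditary hα.spreading]
  exact congrArg sInf (Set.ext hempty)
end
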